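/- Let k ≥ 3 be an integer and let G̃ = (Ṽ, Ẽ) be a 3-regular multigraph. Let G = (V, E) be the multigraph obtained from G̃ by adding, for each vertex v ∈ Ṽ, exactly k − 2 new distinct pendant vertices v_1, …, v_{k−2} and the edges {v, v_i} for 1 ≤ i ≤ k − 2. Then G contains a k-trail if and only if G̃ contains a 2-trail. -/

import Mathlib

/-- A multigraph on vertex type `V`: a finite multiset of unordered pairs of
vertices (loops and parallel edges allowed). -/
structure Multigraph (V : Type) where
  edges : Multiset (Sym2 V)

namespace Multigraph

open Classical in
/-- The degree of a vertex: number of edge-endpoints at `v`, a loop counting twice. -/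
noncomputable def deg {V : Type} (G : Multigraph V) (v : V) : ℕ :=
  (G.edges.map fun e => if e = Sym2.diag v then 2 else if v ∈ e then 1 else 0).sum

/-- Adjacency in a multigraph. -/
def Adj {V : Type} (G : Multigraph V) (u v : V) : Prop := s(u, v) ∈ G.edges

/-- A multigraph is connected if it has a vertex and any two vertices are joined by a walk. -/
def Connected {V : Type} (G : Multigraph V) : Prop :=
  Nonempty V ∧ ∀ u v : V, Relation.ReflTransGen G.Adj u v

open Classical in
/-- `G` is the homomorphic image of `H` by the onto function `φ`: for all `u v`,
the number of edges of `G` between `u` and `v` equals the number of edges of `H`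
whose endpoints are mapped by `φ` to `{u, v}`. -/
def IsHomImage {V W : Type} (G : Multigraph V) (H : Multigraph W) (φ : W → V) : Prop :=
  Function.Surjective φ ∧
    ∀ u v : V, G.edges.count s(u, v) = (H.edges.map (Sym2.map φ)).count s(u, v)

/-- A tree: a connected multigraph with `|F| = |W| - 1`. -/
def IsTree {W : Type} (H : Multigraph W) : Prop :=
  Connected H ∧ Multiset.card H.edges + 1 = Nat.card W

/-- A multigraph is a `k`-trail if it is the homomorphic image of a (finite)
connected multigraph of maximum degree at most `k`. -/
def IsKTrail {V : Type} (G : Multigraph V) (k : ℕ) : Prop :=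
  ∃ (W : Type) (_ : Finite W) (H : Multigraph W) (φ : W → V),
    Connected H ∧ (∀ w, H.deg w ≤ k) ∧ IsHomImage G H φ

/-- `G` contains a `k`-trail if some submultiset `U` of its edges gives a `k`-trail `(V, U)`. -/
def ContainsKTrail {V : Type} (G : Multigraph V) (k : ℕ) : Prop :=
  ∃ U : Multiset (Sym2 V), U ≤ G.edges ∧ IsKTrail (Multigraph.mk U) k

/-- `lam` is a feasible multiplicity vector for `G`. -/
def FeasibleMult {V : Type} (G : Multigraph V) (lam : V → ℕ) : Prop :=
  ∃ (W : Type) (_ : Finite W) (H : Multigraph W) (φ : W → V),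
    Connected H ∧ IsHomImage G H φ ∧ ∀ v : V, Nat.card (φ ⁻¹' {v}) = lam v

end Multigraph

/-!
Call `(H, φ)` a cover of a multigraph if `H` is connected and the multigraph is the homomorphic
image of `H` by `φ`. Backward direction: given a cover of maximum degree 2 of a subgraph of `G̃`,
hang each pendant vertex `(v, i)` as a leaf on one fixed preimage of `v`; degrees grow by at most
`k - 2`.

Forward direction: pendant vertices have degree 1 in `G`, so in a cover `(H, φ)` of maximum degree
`k` of a subgraph of `G` all their preimages are leaves and every pendant edge is used. Deleting
these leaves keeps `H` connected and gives a cover of a subgraph of `G̃`. A vertex alone in its fiber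
still carries all `k - 2` pendant edges of its image, hence at most 2 others; a vertex sharing its
fiber keeps at most `3 - 1 = 2` edges, because the degrees in a fiber add up to at most
`deg_G̃ = 3` and each of them is positive.
-/

theorem Sym2.forall_mem_map {α β : Type*} {f : α → β} {p : β → Prop} {z : Sym2 α} :
    (∀ b ∈ z.map f, p b) ↔ ∀ a ∈ z, p (f a) := by
  induction z using Sym2.ind with
  | _ a b => simp

namespace Multigraph

section General

variable {V W : Type}

def endpoints (G : Multigraph V) : Multiset V := G.edges.bind Sym2.toMultiset

theorem deg_eq_count_endpoints [DecidableEq V] (G : Multigraph V) (v : V) :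
    G.deg v = G.endpoints.count v := by
  rw [deg, endpoints, Multiset.count_bind]
  congr 1
  refine Multiset.map_congr rfl fun e _ => ?_
  induction e using Sym2.ind with
  | _ a b =>
    by_cases ha : a = v <;> by_cases hb : b = v <;>
      simp_all [Sym2.toMultiset, Sym2.diag, eq_comm]

theorem deg_add (X Y : Multiset (Sym2 V)) (v : V) :
    (mk (X + Y)).deg v = (mk X).deg v + (mk Y).deg v := by
  classical
  simp only [deg_eq_count_endpoints, endpoints, Multiset.add_bind, Multiset.count_add]

theorem deg_mono {X Y : Multiset (Sym2 V)} (h : X ≤ Y) (v : V) : (mk X).deg v ≤ (mk Y).deg v := by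
  obtain ⟨Z, rfl⟩ := Multiset.le_iff_exists_add.1 h
  rw [deg_add]
  exact Nat.le_add_right _ _

theorem deg_pos_iff {G : Multigraph V} {v : V} : 0 < G.deg v ↔ ∃ e ∈ G.edges, v ∈ e := by
  classical
  simp [deg_eq_count_endpoints, Multiset.count_pos, endpoints]

theorem two_le_deg {G : Multigraph V} {e₁ e₂ : Sym2 V} (h₁ : e₁ ∈ G.edges) (h₂ : e₂ ∈ G.edges)
    (hne : e₁ ≠ e₂) {v : V} (hv₁ : v ∈ e₁) (hv₂ : v ∈ e₂) : 2 ≤ G.deg v := by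
  have hle : e₁ ::ₘ {e₂} ≤ G.edges := by
    rw [Multiset.le_iff_subset (by simpa using hne)]
    simp [Multiset.cons_subset, h₁, h₂]
  have hpos₁ : 0 < (mk {e₁}).deg v := deg_pos_iff.2 ⟨e₁, by simp, hv₁⟩
  have hpos₂ : 0 < (mk {e₂}).deg v := deg_pos_iff.2 ⟨e₂, by simp, hv₂⟩
  have := deg_mono hle v
  rw [← Multiset.singleton_add, deg_add] at this
  exact le_trans (by omega) this

theorem endpoints_map (f : W → V) (X : Multiset (Sym2 W)) :
    (mk (X.map (Sym2.map f))).endpoints = (mk X).endpoints.map f := by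
  simp only [endpoints, Multiset.map_bind, Multiset.bind_map]
  congr 1
  funext e
  induction e using Sym2.ind with
  | _ a b => rfl

theorem deg_map_eq_sum [Fintype W] [DecidableEq V] (f : W → V) (X : Multiset (Sym2 W)) (v : V) :
    (mk (X.map (Sym2.map f))).deg v = ∑ w with f w = v, (mk X).deg w := by
  classical
  simp only [deg_eq_count_endpoints, endpoints_map]
  induction (mk X).endpoints using Multiset.induction with
  | empty => simp
  | cons a s ih =>
    simp [Multiset.count_cons, Finset.sum_add_distrib, ih, eq_comm]

theorem deg_map_apply {f : W → V} {w : W} (hf : ∀ w', f w' = f w → w' = w)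
    (X : Multiset (Sym2 W)) : (mk (X.map (Sym2.map f))).deg (f w) = (mk X).deg w := by
  classical
  rw [deg_eq_count_endpoints, deg_eq_count_endpoints, endpoints_map, Multiset.count_map,
    Multiset.count_eq_card_filter_eq]
  congr 2
  ext w'
  exact ⟨fun h => (hf w' h.symm).symm, fun h => h ▸ rfl⟩

theorem deg_map_eq_zero {f : W → V} {v : V} (hv : ∀ w, f w ≠ v) (X : Multiset (Sym2 W)) :
    (mk (X.map (Sym2.map f))).deg v = 0 := by
  classical
  rw [deg_eq_count_endpoints, endpoints_map, Multiset.count_eq_zero, Multiset.mem_map]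
  rintro ⟨w, -, hw⟩
  exact hv w hw

theorem deg_le_deg_map [Finite W] (f : W → V) (X : Multiset (Sym2 W)) (w : W) :
    (mk X).deg w ≤ (mk (X.map (Sym2.map f))).deg (f w) := by
  classical
  have := Fintype.ofFinite W
  rw [deg_map_eq_sum]
  exact Finset.single_le_sum (fun _ _ => Nat.zero_le _) (by simp)

theorem add_deg_le_deg_map [Finite W] {f : W → V} {w w' : W} (hne : w ≠ w') (hf : f w' = f w)
    (X : Multiset (Sym2 W)) :
    (mk X).deg w + (mk X).deg w' ≤ (mk (X.map (Sym2.map f))).deg (f w) := by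
  classical
  have := Fintype.ofFinite W
  rw [deg_map_eq_sum, ← Finset.sum_pair hne]
  exact Finset.sum_le_sum_of_subset (by simp [Finset.insert_subset_iff, hf])

theorem map_filter_forall_mem (f : W → V) (p : V → Prop) (X : Multiset (Sym2 W))
    [DecidablePred fun e : Sym2 W => ∀ x ∈ e, p (f x)]
    [DecidablePred fun e : Sym2 V => ∀ y ∈ e, p y] :
    (X.filter fun e => ∀ x ∈ e, p (f x)).map (Sym2.map f) =
      (X.map (Sym2.map f)).filter fun e => ∀ y ∈ e, p y := by
  rw [Multiset.filter_map]
  exact congrArg _ (Multiset.filter_congr fun _ _ => Sym2.forall_mem_map.symm)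

theorem map_filter_not_forall_mem (f : W → V) (p : V → Prop) (X : Multiset (Sym2 W))
    [DecidablePred fun e : Sym2 W => ∀ x ∈ e, p (f x)]
    [DecidablePred fun e : Sym2 V => ∀ y ∈ e, p y] :
    (X.filter fun e => ¬ ∀ x ∈ e, p (f x)).map (Sym2.map f) =
      (X.map (Sym2.map f)).filter fun e => ¬ ∀ y ∈ e, p y := by
  rw [Multiset.filter_map]
  exact congrArg _ (Multiset.filter_congr fun _ _ => not_congr Sym2.forall_mem_map.symm)

theorem Adj.symm {G : Multigraph V} {u v : V} (h : G.Adj u v) : G.Adj v u := by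
  rwa [Adj, Sym2.eq_swap]

instance (G : Multigraph V) : Std.Symm G.Adj := ⟨fun _ _ => Adj.symm⟩

theorem Connected.deg_pos {H : Multigraph W} (hH : H.Connected) {u w : W} (huw : u ≠ w) :
    0 < H.deg w := by
  obtain h | ⟨x, hwx, -⟩ := Relation.ReflTransGen.cases_head (hH.2 w u)
  · exact absurd h.symm huw
  · exact deg_pos_iff.2 ⟨_, hwx, Sym2.mem_mk_left w x⟩

theorem isHomImage_iff (G : Multigraph V) (H : Multigraph W) (φ : W → V) :
    IsHomImage G H φ ↔ φ.Surjective ∧ G.edges = H.edges.map (Sym2.map φ) := by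
  classical
  refine and_congr_right fun _ => ⟨fun h => Multiset.ext.2 fun e => ?_, fun h u v => by rw [h]⟩
  induction e using Sym2.ind with
  | _ u v => exact h u v

theorem IsKTrail.mono {G : Multigraph V} {j k : ℕ} (h : G.IsKTrail j) (hjk : j ≤ k) :
    G.IsKTrail k := by
  obtain ⟨W, hW, H, φ, hH, hdeg, hφ⟩ := h
  exact ⟨W, hW, H, φ, hH, fun w => (hdeg w).trans hjk, hφ⟩

open Classical in
noncomputable def induce (H : Multigraph W) (Q : W → Prop) : Multigraph {w // Q w} :=
  ⟨(H.edges.filter fun e => ∀ x ∈ e, Q x).pmap (fun e he => e.attachWith he)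
    fun _ he => (Multiset.mem_filter.1 he).2⟩

open Classical in
theorem induce_edges_map_val (H : Multigraph W) (Q : W → Prop) :
    (H.induce Q).edges.map (Sym2.map Subtype.val) = H.edges.filter fun e => ∀ x ∈ e, Q x := by
  simp [induce, Multiset.map_pmap, Multiset.pmap_eq_map]

theorem induce_adj {H : Multigraph W} {Q : W → Prop} {x y : W} (hxy : H.Adj x y) (hx : Q x)
    (hy : Q y) : (H.induce Q).Adj ⟨x, hx⟩ ⟨y, hy⟩ := by
  classical
  refine Multiset.mem_pmap.2 ⟨s(x, y), Multiset.mem_filter.2 ⟨hxy, ?_⟩, rfl⟩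
  simp [hx, hy]

theorem Connected.induce {H : Multigraph W} (hH : H.Connected) {Q : W → Prop} (hQ : ∃ w, Q w)
    (hleaf : ∀ w, ¬ Q w → H.deg w ≤ 1) (hmeet : ∀ x y, H.Adj x y → Q x ∨ Q y) :
    (H.induce Q).Connected := by
  obtain ⟨q, hq⟩ := hQ
  have hanchor : ∀ w, ¬ Q w → ∃ x, Q x ∧ ∀ x', H.Adj w x' → x' = x := by
    intro w hw
    obtain h | ⟨x, hwx, -⟩ := Relation.ReflTransGen.cases_head (hH.2 w q)
    · exact absurd (h ▸ hq) hw
    refine ⟨x, (hmeet w x hwx).resolve_left hw, fun x' hwx' => by_contra fun hne => ?_⟩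
    have := two_le_deg hwx' hwx (mt Sym2.congr_right.1 hne) (Sym2.mem_mk_left w x')
      (Sym2.mem_mk_left w x)
    have := hleaf w hw
    omega
  choose! anchor hanchorQ hanchorUniq using hanchor
  classical
  -- `r` retracts each leaf outside `Q` onto its neighbour, so every edge of `H` becomes a walk of
  -- length at most 1 in the induced graph.
  let r : W → {w // Q w} := fun w => if h : Q w then ⟨w, h⟩ else ⟨anchor w, hanchorQ w h⟩
  have hr : ∀ w (hw : Q w), r w = ⟨w, hw⟩ := fun w hw => dif_pos hw
  have hstep : ∀ x y, H.Adj x y → Relation.ReflTransGen (H.induce Q).Adj (r x) (r y) := by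
    intro x y hxy
    by_cases hx : Q x <;> by_cases hy : Q y
    · rw [hr x hx, hr y hy]
      exact .single (induce_adj hxy hx hy)
    · have : r y = r x := by
        rw [hr x hx]; simp only [r, dif_neg hy, hanchorUniq y hy x hxy.symm]
      rw [this]
    · have : r x = r y := by
        rw [hr y hy]; simp only [r, dif_neg hx, hanchorUniq x hx y hxy]
      rw [this]
    · exact absurd (hmeet x y hxy) (by tauto)
  refine ⟨⟨⟨q, hq⟩⟩, fun u v => ?_⟩
  have := Relation.ReflTransGen.lift' r hstep _ _ (hH.2 u.1 v.1)
  rwa [Function.onFun, hr u.1 u.2, hr v.1 v.2] at this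

end General

section Pendants

variable {V : Type} [Fintype V] {m : ℕ}

def pendantEdges (V : Type) [Fintype V] (m : ℕ) : Multiset (Sym2 (V ⊕ V × Fin m)) :=
  (Finset.univ : Finset (V × Fin m)).val.map fun p => s(Sum.inl p.1, Sum.inr p)

def attachPendants (G : Multigraph V) (m : ℕ) : Multigraph (V ⊕ V × Fin m) :=
  ⟨G.edges.map (Sym2.map Sum.inl) + pendantEdges V m⟩

theorem deg_pendantEdges_inl (v : V) : (mk (pendantEdges V m)).deg (Sum.inl v) = m := by
  classical
  rw [deg_eq_count_endpoints, endpoints, pendantEdges, Multiset.bind_map, Multiset.count_bind,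
    Finset.sum_map_val, Fintype.sum_prod_type]
  simp [Sym2.toMultiset, List.count_cons]

theorem deg_pendantEdges_inr (q : V × Fin m) : (mk (pendantEdges V m)).deg (Sum.inr q) = 1 := by
  classical
  rw [deg_eq_count_endpoints, endpoints, pendantEdges, Multiset.bind_map, Multiset.count_bind,
    Finset.sum_map_val]
  simp [Sym2.toMultiset, List.count_cons]

theorem pendantEdges_nodup : (pendantEdges V m).Nodup :=
  Finset.univ.nodup.map fun p q h => (by simpa using h : p.1 = q.1 ∧ p = q).2

theorem eq_of_inr_mem_attachPendants {G : Multigraph V} {e : Sym2 (V ⊕ V × Fin m)}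
    (he : e ∈ (G.attachPendants m).edges) {q : V × Fin m} (hq : Sum.inr q ∈ e) :
    e = s(Sum.inl q.1, Sum.inr q) := by
  rcases Multiset.mem_add.1 he with he | he
  · obtain ⟨f, -, rfl⟩ := Multiset.mem_map.1 he
    obtain ⟨x, -, hx⟩ := Sym2.mem_map.1 hq
    exact absurd hx Sum.inl_ne_inr
  · obtain ⟨p, -, rfl⟩ := Multiset.mem_map.1 he
    obtain rfl : q = p := by simpa using hq
    rfl

theorem exists_isLeft_of_mem_attachPendants {G : Multigraph V} {e : Sym2 (V ⊕ V × Fin m)}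
    (he : e ∈ (G.attachPendants m).edges) : ∃ x ∈ e, x.isLeft := by
  rcases Multiset.mem_add.1 he with he | he
  · obtain ⟨f, -, rfl⟩ := Multiset.mem_map.1 he
    induction f using Sym2.ind with
    | _ a b => exact ⟨Sum.inl a, by simp⟩
  · obtain ⟨p, -, rfl⟩ := Multiset.mem_map.1 he
    exact ⟨Sum.inl p.1, by simp⟩

theorem deg_attachPendants_inr (G : Multigraph V) (q : V × Fin m) :
    (G.attachPendants m).deg (Sum.inr q) = 1 := by
  rw [attachPendants, deg_add, deg_map_eq_zero (fun _ => Sum.inl_ne_inr), deg_pendantEdges_inr]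

theorem not_forall_isLeft_of_mem_pendantEdges {e : Sym2 (V ⊕ V × Fin m)}
    (he : e ∈ pendantEdges V m) : ¬ ∀ x ∈ e, x.isLeft := by
  obtain ⟨p, -, rfl⟩ := Multiset.mem_map.1 he
  intro h
  simpa using h (Sum.inr p) (Sym2.mem_mk_right _ _)

open Classical in
theorem filter_attachPendants_edges (G : Multigraph V) :
    (G.attachPendants m).edges.filter (fun e => ∀ x ∈ e, x.isLeft) =
      G.edges.map (Sym2.map Sum.inl) ∧
    (G.attachPendants m).edges.filter (fun e => ¬ ∀ x ∈ e, x.isLeft) = pendantEdges V m := by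
  have hA : ∀ e ∈ G.edges.map (Sym2.map (Sum.inl : V → V ⊕ V × Fin m)), ∀ x ∈ e, x.isLeft := by
    rintro _ he x hx
    obtain ⟨f, -, rfl⟩ := Multiset.mem_map.1 he
    obtain ⟨a, -, rfl⟩ := Sym2.mem_map.1 hx
    rfl
  have hB : ∀ e ∈ pendantEdges V m, ¬ ∀ x ∈ e, x.isLeft :=
    fun _ => not_forall_isLeft_of_mem_pendantEdges
  simp only [attachPendants, Multiset.filter_add, Multiset.filter_eq_self.2 hA,
    Multiset.filter_eq_nil.2 hB]
  constructor
  · simp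
  · rw [Multiset.filter_eq_nil.2 fun e he h => h (hA e he),
      Multiset.filter_eq_self.2 hB, zero_add]

def hangPendants {W : Type} (H : Multigraph W) (σ : V → W) (m : ℕ) :
    Multigraph (W ⊕ V × Fin m) :=
  ⟨H.edges.map (Sym2.map Sum.inl) + (pendantEdges V m).map (Sym2.map (Sum.map σ id))⟩

section Hang

variable {W : Type} {H : Multigraph W} {σ : V → W}

theorem Connected.hangPendants (hH : H.Connected) (σ : V → W) :
    (H.hangPendants σ m).Connected := by
  have hleft : ∀ x y, Relation.ReflTransGen (H.hangPendants σ m).Adj (Sum.inl x) (Sum.inl y) := by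
    intro x y
    refine Relation.ReflTransGen.lift' Sum.inl (fun a b hab => .single ?_) _ _ (hH.2 x y)
    exact Multiset.mem_add.2 (.inl (Multiset.mem_map_of_mem (Sym2.map Sum.inl) hab))
  have hreach : ∀ u, ∃ x, Relation.ReflTransGen (H.hangPendants σ m).Adj u (Sum.inl x) := by
    rintro (x | p)
    · exact ⟨x, .refl⟩
    · refine ⟨σ p.1, .single (Adj.symm (Multiset.mem_add.2 (.inr ?_)))⟩
      exact Multiset.mem_map_of_mem _ (Multiset.mem_map_of_mem _ (Finset.mem_univ p))
  refine ⟨hH.1.map Sum.inl, fun u v => ?_⟩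
  obtain ⟨x, hx⟩ := hreach u
  obtain ⟨y, hy⟩ := hreach v
  exact (hx.trans (hleft x y)).trans (Std.Symm.symm _ _ hy)

theorem deg_hangPendants_inl_le (hσ : σ.Injective) (w : W) :
    (H.hangPendants σ m).deg (Sum.inl w) ≤ H.deg w + m := by
  have hι : (Sum.map σ id : V ⊕ V × Fin m → W ⊕ V × Fin m).Injective :=
    Sum.map_injective.2 ⟨hσ, Function.injective_id⟩
  rw [hangPendants, deg_add, deg_map_apply fun _ h => Sum.inl_injective h]
  refine Nat.add_le_add_left ?_ _
  by_cases hw : ∃ v, σ v = w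
  · obtain ⟨v, rfl⟩ := hw
    rw [show Sum.inl (σ v) = Sum.map σ id (Sum.inl v) from rfl,
      deg_map_apply fun _ h => hι h, deg_pendantEdges_inl]
  · refine (deg_map_eq_zero ?_ _).trans_le (Nat.zero_le m)
    rintro (v | p) h
    · exact hw ⟨v, Sum.inl_injective h⟩
    · exact Sum.inr_ne_inl h

theorem deg_hangPendants_inr (hσ : σ.Injective) (p : V × Fin m) :
    (H.hangPendants σ m).deg (Sum.inr p) = 1 := by
  have hι : (Sum.map σ id : V ⊕ V × Fin m → W ⊕ V × Fin m).Injective :=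
    Sum.map_injective.2 ⟨hσ, Function.injective_id⟩
  rw [hangPendants, deg_add, deg_map_eq_zero fun _ => Sum.inl_ne_inr,
    show Sum.inr p = Sum.map σ id (Sum.inr p) from rfl, deg_map_apply fun _ h => hι h,
    deg_pendantEdges_inr, zero_add]

theorem hangPendants_edges_map {φ : W → V} (hσ : Function.LeftInverse φ σ) :
    (H.hangPendants σ m).edges.map (Sym2.map (Sum.map φ id)) =
      ((mk (H.edges.map (Sym2.map φ))).attachPendants m).edges := by
  rw [hangPendants, attachPendants, Multiset.map_add, Multiset.map_map, Multiset.map_map,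
    Multiset.map_map]
  congr 1
  · refine Multiset.map_congr rfl fun e _ => ?_
    simp only [Function.comp_apply, Sym2.map_map]
    rfl
  · refine (Multiset.map_congr rfl fun e _ => ?_).trans (Multiset.map_id' _)
    induction e using Sym2.ind
    simp [show φ ∘ σ = id from funext hσ]

end Hang

theorem IsKTrail.attachPendants {G : Multigraph V} {j : ℕ} (h : G.IsKTrail j) :
    (G.attachPendants m).IsKTrail (j + m) := by
  obtain ⟨W, _, H, φ, hH, hdeg, hφ⟩ := h
  obtain ⟨hsurj, hG⟩ := (isHomImage_iff _ _ _).1 hφ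
  choose σ hσ using hsurj
  have hσinj : σ.Injective := Function.LeftInverse.injective hσ
  refine ⟨W ⊕ V × Fin m, inferInstance, H.hangPendants σ m, Sum.map φ id, hH.hangPendants σ, ?_,
    (isHomImage_iff _ _ _).2 ⟨?_, ?_⟩⟩
  · rintro (w | p)
    · exact (deg_hangPendants_inl_le hσinj w).trans (Nat.add_le_add_right (hdeg w) m)
    · rw [deg_hangPendants_inr hσinj]
      have := p.2.pos
      omega
  · rintro (v | p)
    · exact ⟨Sum.inl (σ v), congrArg Sum.inl (hσ v)⟩
    · exact ⟨Sum.inr p, rfl⟩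
  · rw [hangPendants_edges_map hσ, ← hG]

theorem ContainsKTrail.attachPendants {G : Multigraph V} {j k : ℕ} (h : G.ContainsKTrail j)
    (hk : j + m ≤ k) : (G.attachPendants m).ContainsKTrail k := by
  obtain ⟨U, hU, hUj⟩ := h
  exact ⟨_, add_le_add_left (Multiset.map_le_map hU) _, hUj.attachPendants.mono hk⟩

section Forward

variable {W : Type} {G : Multigraph V} {H : Multigraph W} {φ : W → V ⊕ V × Fin m}

theorem pendantEdges_le_map (hφ : φ.Surjective) (hH : H.Connected)
    (hU : H.edges.map (Sym2.map φ) ≤ (G.attachPendants m).edges) :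
    pendantEdges V m ≤ H.edges.map (Sym2.map φ) := by
  rw [Multiset.le_iff_subset pendantEdges_nodup]
  intro e he
  obtain ⟨q, -, rfl⟩ := Multiset.mem_map.1 he
  obtain ⟨w, hw⟩ := hφ (Sum.inr q)
  obtain ⟨u, hu⟩ := hφ (Sum.inl q.1)
  have huw : u ≠ w := fun h => Sum.inl_ne_inr (hu.symm.trans (h ▸ hw))
  obtain ⟨f, hf, hwf⟩ := deg_pos_iff.1 (hH.deg_pos huw)
  have hfU := Multiset.mem_map_of_mem (Sym2.map φ) hf
  rwa [← eq_of_inr_mem_attachPendants (Multiset.mem_of_le hU hfU) (Sym2.mem_map.2 ⟨w, hwf, hw⟩)]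

theorem deg_le_one_of_apply_eq_inr [Finite W]
    (hU : H.edges.map (Sym2.map φ) ≤ (G.attachPendants m).edges) {w : W} {q : V × Fin m}
    (hw : φ w = Sum.inr q) : H.deg w ≤ 1 :=
  calc H.deg w ≤ (mk (H.edges.map (Sym2.map φ))).deg (φ w) := deg_le_deg_map φ H.edges w
    _ ≤ (G.attachPendants m).deg (φ w) := deg_mono hU _
    _ = 1 := by rw [hw, deg_attachPendants_inr]

theorem isLeft_or_isLeft_of_adj (hU : H.edges.map (Sym2.map φ) ≤ (G.attachPendants m).edges)
    {x y : W} (hxy : H.Adj x y) : (φ x).isLeft ∨ (φ y).isLeft := by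
  obtain ⟨z, hz, hzl⟩ :=
    exists_isLeft_of_mem_attachPendants (Multiset.mem_of_le hU (Multiset.mem_map_of_mem _ hxy))
  rcases Sym2.mem_iff.1 hz with rfl | rfl
  exacts [.inl hzl, .inr hzl]

open Classical in
theorem map_filter_forall_isLeft_le
    (hU : H.edges.map (Sym2.map φ) ≤ (G.attachPendants m).edges) :
    (H.edges.filter fun e => ∀ x ∈ e, (φ x).isLeft).map (Sym2.map φ) ≤
      G.edges.map (Sym2.map Sum.inl) := by
  rw [map_filter_forall_mem φ (fun y : V ⊕ V × Fin m => y.isLeft),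
    ← (filter_attachPendants_edges G).1]
  exact Multiset.filter_le_filter _ hU

open Classical in
theorem map_filter_not_forall_isLeft
    (hU : H.edges.map (Sym2.map φ) ≤ (G.attachPendants m).edges)
    (hB : pendantEdges V m ≤ H.edges.map (Sym2.map φ)) :
    (H.edges.filter fun e => ¬ ∀ x ∈ e, (φ x).isLeft).map (Sym2.map φ) = pendantEdges V m := by
  rw [map_filter_not_forall_mem φ (fun y : V ⊕ V × Fin m => y.isLeft)]
  refine le_antisymm ?_ ?_
  · rw [← (filter_attachPendants_edges G).2]
    exact Multiset.filter_le_filter _ hU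
  calc pendantEdges V m
      = (pendantEdges V m).filter fun e => ¬ ∀ x ∈ e, x.isLeft :=
        (Multiset.filter_eq_self.2 fun _ => not_forall_isLeft_of_mem_pendantEdges).symm
    _ ≤ _ := Multiset.filter_le_filter _ hB

theorem map_induce_le (hU : H.edges.map (Sym2.map φ) ≤ (G.attachPendants m).edges) :
    (H.induce fun w => (φ w).isLeft).edges.map
      (Sym2.map fun w : {w // (φ w).isLeft} => (φ w).getLeft w.2) ≤ G.edges := by
  classical
  rw [← Multiset.map_le_map_iff (Sym2.map.injective Sum.inl_injective), Multiset.map_map]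
  convert map_filter_forall_isLeft_le hU using 1
  rw [← induce_edges_map_val, Multiset.map_map]
  refine Multiset.map_congr rfl fun e _ => ?_
  simp only [Function.comp_apply, Sym2.map_map]
  exact Sym2.map_congr fun w _ => Sum.inl_getLeft _ w.2

theorem deg_induce_le [Finite W] {j k : ℕ} (hG : ∀ v, G.deg v ≤ j + 1) (hk : k ≤ j + m)
    (hdeg : ∀ w, H.deg w ≤ k) (hU : H.edges.map (Sym2.map φ) ≤ (G.attachPendants m).edges)
    (hB : pendantEdges V m ≤ H.edges.map (Sym2.map φ))
    (hR : (H.induce fun w => (φ w).isLeft).Connected) (w : {w // (φ w).isLeft}) :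
    (H.induce fun w => (φ w).isLeft).deg w ≤ j := by
  classical
  set R := H.induce fun w => (φ w).isLeft
  set ψ := fun w : {w // (φ w).isLeft} => (φ w).getLeft w.2
  have hRdeg : ∀ u, R.deg u = (mk (H.edges.filter fun e => ∀ x ∈ e, (φ x).isLeft)).deg u.1 :=
    fun u => by rw [← induce_edges_map_val, deg_map_apply fun _ h => Subtype.val_injective h]
  by_cases hfiber : ∃ u, u ≠ w ∧ ψ u = ψ w
  · obtain ⟨u, hne, hu⟩ := hfiber
    have hu_pos : 0 < R.deg u := hR.deg_pos hne.symm
    have hsum : R.deg w + R.deg u ≤ G.deg (ψ w) :=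
      (add_deg_le_deg_map hne.symm hu R.edges).trans (deg_mono (map_induce_le hU) _)
    have := hG (ψ w)
    omega
  · have hφw : φ w = Sum.inl (ψ w) := (Sum.inl_getLeft _ w.2).symm
    have hfiber' : ∀ u, φ u = φ w → u = w.1 := by
      intro u hu
      have hul : (φ u).isLeft := by rw [hu, hφw]; rfl
      by_contra hne
      exact hfiber ⟨⟨u, hul⟩, fun h => hne (congrArg Subtype.val h),
        Sum.inl_injective ((Sum.inl_getLeft _ hul).trans (hu.trans hφw))⟩
    have hpendant : (mk (H.edges.filter fun e => ¬ ∀ x ∈ e, (φ x).isLeft)).deg w = m := by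
      rw [← deg_map_apply hfiber', map_filter_not_forall_isLeft hU hB, hφw, deg_pendantEdges_inl]
    have hsplit := deg_add (H.edges.filter fun e => ∀ x ∈ e, (φ x).isLeft)
      (H.edges.filter fun e => ¬ ∀ x ∈ e, (φ x).isLeft) w
    rw [Multiset.filter_add_not] at hsplit
    have := hdeg w
    have := hRdeg w
    change H.deg w = _ at hsplit
    omega

end Forward

theorem ContainsKTrail.of_attachPendants {G : Multigraph V} {j k : ℕ}
    (hG : ∀ v, G.deg v ≤ j + 1) (hk : k ≤ j + m) (h : (G.attachPendants m).ContainsKTrail k) :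
    G.ContainsKTrail j := by
  obtain ⟨U, hU, W, _, H, φ, hH, hdeg, hφ⟩ := h
  obtain ⟨hsurj, rfl⟩ := (isHomImage_iff _ _ _).1 hφ
  have hleft : ∀ v, ∃ w : {w // (φ w).isLeft}, φ w = Sum.inl v := fun v => by
    obtain ⟨w, hw⟩ := hsurj (Sum.inl v)
    exact ⟨⟨w, by simp [hw]⟩, hw⟩
  have hR : (H.induce fun w => (φ w).isLeft).Connected := by
    obtain ⟨w₀⟩ := hH.1
    obtain ⟨w₁, -⟩ := hleft ((φ w₀).elim id Prod.fst)
    refine hH.induce ⟨w₁.1, w₁.2⟩ (fun w hw => ?_) fun x y hxy => isLeft_or_isLeft_of_adj hU hxy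
    cases hφw : φ w with
    | inl v => simp [hφw] at hw
    | inr q => exact deg_le_one_of_apply_eq_inr hU hφw
  refine ⟨_, map_induce_le hU, _, inferInstance, _, _, hR,
    deg_induce_le hG hk hdeg hU (pendantEdges_le_map hsurj hH hU) hR,
    (isHomImage_iff _ _ _).2 ⟨fun v => ?_, rfl⟩⟩
  obtain ⟨w, hw⟩ := hleft v
  exact ⟨w, Sum.inl_injective ((Sum.inl_getLeft _ w.2).trans hw)⟩

end Pendants

end Multigraph

open Multigraph

theorem pendant_reduction_general {Vt : Type} [Fintype Vt]
    (Gt : Multigraph Vt) (h3 : ∀ v : Vt, Gt.deg v = 3)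
    (k : ℕ) (hk : 3 ≤ k) :
    ContainsKTrail
      (Multigraph.mk (V := Vt ⊕ Vt × Fin (k - 2))
        (Gt.edges.map (Sym2.map Sum.inl) +
          Multiset.map (fun p : Vt × Fin (k - 2) => s(Sum.inl p.1, Sum.inr p))
            Finset.univ.val)) k ↔
    ContainsKTrail Gt 2 :=
  ⟨ContainsKTrail.of_attachPendants (G := Gt) (m := k - 2) (fun v => (h3 v).le) (by omega),
    fun h => h.attachPendants (by omega)⟩

/-- Pendant-vertex reduction: let `G` be obtained from a 3-regular multigraph `Gt` by
attaching `k - 2` new pendant vertices to each vertex of `Gt`. Then `G` contains a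
`k`-trail iff `Gt` contains a `2`-trail. -/
theorem pendant_reduction {Vt : Type} [Fintype Vt]
    (hV : 2 ≤ Nat.card Vt)
    (Gt : Multigraph Vt) (h3 : ∀ v : Vt, Gt.deg v = 3)
    (k : ℕ) (hk : 3 ≤ k) :
    ContainsKTrail
      (Multigraph.mk (V := Vt ⊕ Vt × Fin (k - 2))
        (Gt.edges.map (Sym2.map Sum.inl) +
          Multiset.map (fun p : Vt × Fin (k - 2) => s(Sum.inl p.1, Sum.inr p))
            Finset.univ.val)) k ↔
    ContainsKTrail Gt 2 :=
  pendant_reduction_general Gt h3 k hk
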